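/- Under the reflection setup, if Ω_λ has positive Lebesgue measure and N = α, then the logarithmic potential u(x) = ∫_Ω log(1/|x−y|) dy satisfies u(x_λ) > u(x) for every x ∈ Σ_λ with x₁ < λ. -/

import Mathlib

open MeasureTheory

/-- Reflection of `x` across the hyperplane `{z : z 0 = l}`. -/
noncomputable def reflH {N : ℕ} [NeZero N] (l : ℝ) (x : EuclideanSpace ℝ (Fin N)) :
    EuclideanSpace ℝ (Fin N) :=
  WithLp.toLp 2 (Function.update x 0 (2 * l - x 0))

/-- `Σ_λ = {x ∈ Ω : x₁ < λ}`. -/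
def sigmaL {N : ℕ} [NeZero N] (Ω : Set (EuclideanSpace ℝ (Fin N))) (l : ℝ) :
    Set (EuclideanSpace ℝ (Fin N)) :=
  {x ∈ Ω | x 0 < l}

/-- `Ω_λ = Ω \ closure (Σ_λ ∪ Σ'_λ)`. -/
noncomputable def omegaL {N : ℕ} [NeZero N] (Ω : Set (EuclideanSpace ℝ (Fin N))) (l : ℝ) :
    Set (EuclideanSpace ℝ (Fin N)) :=
  Ω \ closure (sigmaL Ω l ∪ reflH l '' sigmaL Ω l)

/-!
The reflection `x ↦ x_λ` is an isometric involution of `ℝᴺ`, so it preserves Lebesgue measure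
and the symmetric set `S = Σ_λ ∪ Σ'_λ ⊆ Ω`; hence the potentials of `x` and `x_λ` have the same
integral over `S`. Every `y ∈ Ω \ S` has `y₁ ≥ λ` and is therefore at least as close to `x_λ` as
to `x`, strictly so on `Ω_λ`, where `y₁ > λ` because `Ω` is open. As `Ω_λ` has positive measure,
the inequality of the integrals is strict. The logarithmic kernel is integrable on bounded sets
since `|log t| ≤ 2 t^(-1/2) + t` and `‖y‖^(-1/2)` is locally integrable in dimension `N ≥ 1`.
-/

open Metric Set

lemma Real.abs_log_le_two_mul_rpow_neg_half_add_self {t : ℝ} (ht : 0 ≤ t) :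
    |Real.log t| ≤ 2 * t ^ (-(1 / 2 : ℝ)) + t := by
  rcases ht.eq_or_lt with rfl | ht
  · simp
  rcases le_or_gt t 1 with ht1 | ht1
  · have h := Real.abs_log_mul_self_rpow_lt t (1 / 2) ht ht1 (by norm_num)
    rw [abs_mul, abs_of_pos (Real.rpow_pos_of_pos ht _), lt_div_iff₀ (by norm_num)] at h
    have hinv : t ^ (1 / 2 : ℝ) * t ^ (-(1 / 2 : ℝ)) = 1 := by
      rw [← Real.rpow_add ht]; simp
    nlinarith [Real.rpow_pos_of_pos ht (-(1 / 2 : ℝ)), abs_nonneg (Real.log t)]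
  · rw [abs_of_nonneg (Real.log_nonneg ht1.le)]
    linarith [Real.log_le_self ht.le, Real.rpow_pos_of_pos ht (-(1 / 2 : ℝ))]

section LogIntegrability
variable {E : Type*} [NormedAddCommGroup E] [NormedSpace ℝ E] [FiniteDimensional ℝ E]
  [MeasurableSpace E] [BorelSpace E] {μ : Measure E} [μ.IsAddHaarMeasure]

lemma locallyIntegrable_log_norm [Nontrivial E] :
    LocallyIntegrable (fun x : E => Real.log ‖x‖) μ := by
  have hrank : (1 : ℝ) ≤ Module.finrank ℝ E := by exact_mod_cast Module.finrank_pos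
  have hrpow : LocallyIntegrable (fun x : E => ‖x‖ ^ (-(1 / 2 : ℝ))) μ :=
    locallyIntegrable_of_norm_le_rpow (C := 1) (α := 1 / 2) (by exact_mod_cast hrank)
      (by linarith)
      (ae_of_all _ fun x => by simp [abs_of_nonneg (Real.rpow_nonneg (norm_nonneg x) _)])
      (measurable_norm.pow_const _).aestronglyMeasurable
  refine ((hrpow.smul (2 : ℝ)).add continuous_norm.locallyIntegrable).mono
    (measurable_norm.log).aestronglyMeasurable (ae_of_all _ fun x => ?_)
  rw [Real.norm_eq_abs]
  exact (Real.abs_log_le_two_mul_rpow_neg_half_add_self (norm_nonneg x)).trans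
    (Real.le_norm_self _)

lemma MeasureTheory.LocallyIntegrable.comp_sub_left {F : Type*} [NormedAddCommGroup F] {f : E → F}
    (hf : LocallyIntegrable f μ) (x : E) : LocallyIntegrable (fun y => f (x - y)) μ := by
  rw [← (Measure.measurePreserving_sub_left μ x).map_eq] at hf
  exact (locallyIntegrable_map_homeomorph (Homeomorph.subLeft x)).1 hf

lemma integrableOn_log_one_div_norm_sub [Nontrivial E] {s : Set E} (hs : Bornology.IsBounded s)
    (x : E) : IntegrableOn (fun y => Real.log (1 / ‖x - y‖)) s μ := by
  have h := ((locallyIntegrable_log_norm (μ := μ)).comp_sub_left x).neg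
  refine ((h.integrableOn_isCompact hs.isCompact_closure).mono_set subset_closure).congr
    (ae_of_all _ fun y => ?_)
  simp [Real.log_inv]

end LogIntegrability

lemma IsometryEquiv.measurePreserving_volume {V : Type*} [NormedAddCommGroup V]
    [InnerProductSpace ℝ V] [FiniteDimensional ℝ V] [MeasurableSpace V] [BorelSpace V]
    (e : V ≃ᵢ V) : MeasurePreserving e volume volume := by
  simpa only [InnerProductSpace.euclideanHausdorffMeasure_eq_volume] using
    e.measurePreserving_euclideanHausdorffMeasure (Module.finrank ℝ V)

lemma MeasureTheory.setIntegral_lt_setIntegral_of_setIntegral_inter_eq {X : Type*}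
    [MeasurableSpace X] {μ : Measure X} {f g : X → ℝ} {s t u : Set X} (hs : MeasurableSet s) (ht : MeasurableSet t)
    (hf : IntegrableOn f s μ) (hg : IntegrableOn g s μ)
    (heq : ∫ x in s ∩ t, f x ∂μ = ∫ x in s ∩ t, g x ∂μ) (hle : ∀ x ∈ s \ t, f x ≤ g x)
    (hu : u ⊆ s \ t) (hlt : ∀ x ∈ u, f x < g x) (hμu : 0 < μ u) :
    ∫ x in s, f x ∂μ < ∫ x in s, g x ∂μ := by
  rw [← integral_inter_add_sdiff ht hf, ← integral_inter_add_sdiff ht hg, heq,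
    add_lt_add_iff_left, ← sub_pos,
    ← integral_sub (hg.mono_set sdiff_subset) (hf.mono_set sdiff_subset)]
  rw [setIntegral_pos_iff_support_of_nonneg_ae (f := fun x => g x - f x) _
    ((hg.sub hf).mono_set sdiff_subset)]
  · refine hμu.trans_le (measure_mono fun x hx => ⟨?_, hu hx⟩)
    exact (sub_pos.2 (hlt x hx)).ne'
  · filter_upwards [ae_restrict_mem (hs.diff ht)] with x hx using sub_nonneg.2 (hle x hx)

lemma closure_setOf_apply_lt {N : ℕ} (i : Fin N) (a : ℝ) :
    closure {y : EuclideanSpace ℝ (Fin N) | y i < a} = {y | y i ≤ a} := by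
  change closure ((fun y : EuclideanSpace ℝ (Fin N) => y i) ⁻¹' Iio a) = _ ⁻¹' Iic a
  rw [← (PiLp.isOpenMap_apply 2 _ i).preimage_closure_eq_closure_preimage (by fun_prop),
    closure_Iio]

section Reflection
variable {N : ℕ} [NeZero N] {l : ℝ} {x y : EuclideanSpace ℝ (Fin N)}

@[simp]
lemma reflH_apply_zero (l : ℝ) (x : EuclideanSpace ℝ (Fin N)) : reflH l x 0 = 2 * l - x 0 := by
  simp [reflH]

lemma reflH_apply_of_ne (l : ℝ) (x : EuclideanSpace ℝ (Fin N)) {i : Fin N} (hi : i ≠ 0) :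
    reflH l x i = x i := by
  simp [reflH, Function.update_of_ne hi]

@[simp]
lemma reflH_reflH (l : ℝ) (x : EuclideanSpace ℝ (Fin N)) : reflH l (reflH l x) = x := by
  ext i
  rcases eq_or_ne i 0 with rfl | hi
  · simp
  · rw [reflH_apply_of_ne _ _ hi, reflH_apply_of_ne _ _ hi]

lemma reflH_involutive (l : ℝ) : Function.Involutive (reflH (N := N) l) :=
  reflH_reflH l

lemma norm_reflH_sub_sq (l : ℝ) (x y : EuclideanSpace ℝ (Fin N)) :
    ‖reflH l x - y‖ ^ 2 = ‖x - y‖ ^ 2 - 4 * (l - x 0) * (y 0 - l) := by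
  simp only [EuclideanSpace.norm_sq_eq, Real.norm_eq_abs, sq_abs, PiLp.sub_apply]
  rw [Fintype.sum_eq_add_sum_compl 0, Fintype.sum_eq_add_sum_compl 0 (fun i => (x i - y i) ^ 2),
    Finset.sum_congr rfl fun i hi => by rw [reflH_apply_of_ne l x (by simpa using hi)],
    reflH_apply_zero]
  ring

lemma norm_reflH_sub_comm (l : ℝ) (x y : EuclideanSpace ℝ (Fin N)) :
    ‖reflH l x - y‖ = ‖x - reflH l y‖ := by
  rw [← sq_eq_sq₀ (norm_nonneg _) (norm_nonneg _), norm_sub_rev x, norm_reflH_sub_sq,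
    norm_reflH_sub_sq, norm_sub_rev]
  ring

@[simp]
lemma norm_reflH_sub_reflH (l : ℝ) (x y : EuclideanSpace ℝ (Fin N)) :
    ‖reflH l x - reflH l y‖ = ‖x - y‖ := by
  rw [norm_reflH_sub_comm, reflH_reflH]

lemma isometry_reflH (l : ℝ) : Isometry (reflH (N := N) l) :=
  Isometry.of_dist_eq fun x y => by rw [dist_eq_norm, dist_eq_norm, norm_reflH_sub_reflH]

noncomputable def reflHIsometryEquiv (l : ℝ) :
    EuclideanSpace ℝ (Fin N) ≃ᵢ EuclideanSpace ℝ (Fin N) where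
  toEquiv := (reflH_involutive l).toPerm _
  isometry_toFun := isometry_reflH l

@[simp]
lemma coe_reflHIsometryEquiv (l : ℝ) : ⇑(reflHIsometryEquiv (N := N) l) = reflH l := rfl

lemma norm_reflH_sub_le (hx : x 0 ≤ l) (hy : l ≤ y 0) : ‖reflH l x - y‖ ≤ ‖x - y‖ := by
  refine pow_le_pow_iff_left₀ (norm_nonneg _) (norm_nonneg _) two_ne_zero |>.1 ?_
  rw [norm_reflH_sub_sq]
  nlinarith

lemma norm_reflH_sub_lt (hx : x 0 < l) (hy : l < y 0) : ‖reflH l x - y‖ < ‖x - y‖ := by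
  refine pow_lt_pow_iff_left₀ (norm_nonneg _) (norm_nonneg _) two_ne_zero |>.1 ?_
  rw [norm_reflH_sub_sq]
  nlinarith

lemma setIntegral_norm_reflH_sub {s : Set (EuclideanSpace ℝ (Fin N))} (hs : reflH l ⁻¹' s = s)
    (φ : ℝ → ℝ) (x : EuclideanSpace ℝ (Fin N)) :
    ∫ y in s, φ ‖reflH l x - y‖ = ∫ y in s, φ ‖x - y‖ := by
  have h := (reflHIsometryEquiv (N := N) l).measurePreserving_volume.setIntegral_preimage_emb
    (reflHIsometryEquiv l).toHomeomorph.measurableEmbedding (fun y => φ ‖reflH l x - y‖) s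
  rw [coe_reflHIsometryEquiv] at h
  rw [← h, hs]
  simp_rw [norm_reflH_sub_reflH]

lemma preimage_reflH_union_image (l : ℝ) (s : Set (EuclideanSpace ℝ (Fin N))) :
    reflH l ⁻¹' (s ∪ reflH l '' s) = s ∪ reflH l '' s := by
  rw [(reflH_involutive l).image_eq_preimage_symm, preimage_union,
    (reflH_involutive l).preimage s, union_comm]

lemma IsOpen.union_image_reflH {s : Set (EuclideanSpace ℝ (Fin N))} (hs : IsOpen s) (l : ℝ) :
    IsOpen (s ∪ reflH l '' s) := by
  rw [(reflH_involutive l).image_eq_preimage_symm]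
  exact hs.union (hs.preimage (isometry_reflH l).continuous)

lemma isOpen_sigmaL {Ω : Set (EuclideanSpace ℝ (Fin N))} (hΩ : IsOpen Ω) (l : ℝ) :
    IsOpen (sigmaL Ω l) :=
  hΩ.inter (isOpen_lt (f := fun y : EuclideanSpace ℝ (Fin N) => y 0) (by fun_prop)
    continuous_const)

lemma omegaL_subset_setOf_lt {Ω : Set (EuclideanSpace ℝ (Fin N))} (hΩ : IsOpen Ω) (l : ℝ) :
    omegaL Ω l ⊆ {y | l < y 0} := by
  rintro y ⟨hyΩ, hy⟩
  show l < y 0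
  by_contra! hyl
  have hy_closure : y ∈ closure {z : EuclideanSpace ℝ (Fin N) | z 0 < l} := by
    rw [closure_setOf_apply_lt]
    exact hyl
  exact hy (closure_mono subset_union_left (hΩ.inter_closure ⟨hyΩ, hy_closure⟩))

lemma log_one_div_norm_sub_le_reflH (hx : x 0 ≤ l) (hy : l ≤ y 0) (hyx : y ≠ reflH l x) :
    Real.log (1 / ‖x - y‖) ≤ Real.log (1 / ‖reflH l x - y‖) := by
  rw [one_div, one_div, Real.log_inv, Real.log_inv, neg_le_neg_iff]
  exact Real.log_le_log (norm_sub_pos_iff.2 hyx.symm) (norm_reflH_sub_le hx hy)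

lemma log_one_div_norm_sub_lt_reflH (hx : x 0 < l) (hy : l < y 0) (hyx : y ≠ reflH l x) :
    Real.log (1 / ‖x - y‖) < Real.log (1 / ‖reflH l x - y‖) := by
  rw [one_div, one_div, Real.log_inv, Real.log_inv, neg_lt_neg_iff]
  exact Real.log_lt_log (norm_sub_pos_iff.2 hyx.symm) (norm_reflH_sub_lt hx hy)

end Reflection

/-- If `Ω_λ` has positive Lebesgue measure, the logarithmic potential
`u(x) = ∫_Ω log(1/|x−y|) dy` (case `N = α`) satisfies `u(x_λ) > u(x)` for `x ∈ Σ_λ`. -/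
theorem log_potential_reflection_gt {N : ℕ} [NeZero N]
    (Ω : Set (EuclideanSpace ℝ (Fin N))) (hΩo : IsOpen Ω) (hΩb : Bornology.IsBounded Ω)
    (l : ℝ) (hrefl : reflH l '' sigmaL Ω l ⊆ Ω)
    (hpos : 0 < volume (omegaL Ω l)) :
    ∀ x ∈ Ω, x 0 < l →
      (∫ y in Ω, Real.log (1 / ‖x - y‖)) < ∫ y in Ω, Real.log (1 / ‖reflH l x - y‖) := by
  intro x hxΩ hxl
  set S := sigmaL Ω l ∪ reflH l '' sigmaL Ω l
  have hSΩ : S ⊆ Ω := union_subset (fun y hy => hy.1) hrefl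
  have hS : IsOpen S := (isOpen_sigmaL hΩo l).union_image_reflH l
  have hxrS : reflH l x ∈ S := Or.inr ⟨x, ⟨hxΩ, hxl⟩, rfl⟩
  refine setIntegral_lt_setIntegral_of_setIntegral_inter_eq hΩo.measurableSet hS.measurableSet
    (integrableOn_log_one_div_norm_sub hΩb x) (integrableOn_log_one_div_norm_sub hΩb _) ?_ ?_
    (sdiff_subset_sdiff_right subset_closure) ?_ hpos
  · rw [inter_eq_right.2 hSΩ]
    exact (setIntegral_norm_reflH_sub (preimage_reflH_union_image l _)
      (fun t => Real.log (1 / t)) x).symm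
  · rintro y ⟨hyΩ, hyS⟩
    exact log_one_div_norm_sub_le_reflH hxl.le (not_lt.1 fun h => hyS (Or.inl ⟨hyΩ, h⟩))
      (ne_of_mem_of_not_mem hxrS hyS).symm
  · intro y hy
    exact log_one_div_norm_sub_lt_reflH hxl (omegaL_subset_setOf_lt hΩo l hy)
      (fun h => hy.2 (subset_closure (h ▸ hxrS)))
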